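/- There exists no element of the lower BL spectrum of rotations strictly between 3 − √3 and (5 − √5)/2; that is, for every irrational α with bounded partial quotients, liminf_{k→∞}(1 + tₖvₖ) is either ≤ 3 − √3 or equal to (5 − √5)/2, where tₖ = [0; b_{k+1}, ...], vₖ = [0; bₖ, ..., b₁]. -/

import Mathlib

/-!
If the partial quotients are eventually `1`, the tails `tₖ` are eventually equal to `φ⁻¹`, the
fixed point of `x ↦ 1 / (1 + x)`, and `vₖ → φ⁻¹` since that map contracts; hence the liminf is
`1 + φ⁻² = (5 - √5) / 2`.

Otherwise suppose `tₖ vₖ ≥ u > 2 - √3` for all large `k`. Combining this at two consecutive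
indices around a partial quotient `≥ 2` gives a tail `x ≥ 2u / (1 - u) > √3 - 1`. Such a tail
forces the next two partial quotients to be `1` and `2`, so the tail two steps later is
`x / (1 - x) - 2`, which again exceeds `2u / (1 - u)`. As `√3 - 1` is a repelling fixed point of
`x ↦ x / (1 - x) - 2`, iterating drives the tails above `1`, which is absurd.
-/

open Filter

noncomputable def cfFin : List ℕ → ℝ
  | [] => 0
  | a :: l => 1 / ((a : ℝ) + cfFin l)

noncomputable def cfInf (a : ℕ → ℕ) : ℝ :=
  limUnder Filter.atTop (fun n => cfFin (List.ofFn (fun i : Fin n => a i)))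

/-- forward tail: `cfT a k = [0; b_{k+1}, b_{k+2}, …]` where `bᵢ = a (i-1)`. -/
noncomputable def cfT (a : ℕ → ℕ) (k : ℕ) : ℝ := cfInf (fun n => a (n + k))

/-- backward tail: `cfV a k = [0; b_k, …, b_1]`. -/
noncomputable def cfV (a : ℕ → ℕ) (k : ℕ) : ℝ := cfFin ((List.range k).reverse.map a)

def cfQ (a : ℕ → ℕ) : ℕ → ℕ
  | 0 => 1
  | 1 => a 0
  | (k + 2) => a (k + 1) * cfQ a (k + 1) + cfQ a k

def cfP (a : ℕ → ℕ) : ℕ → ℕ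
  | 0 => 0
  | 1 => 1
  | (k + 2) => a (k + 1) * cfP a (k + 1) + cfP a k

open scoped goldenRatio

lemma cfFin_nonneg (l : List ℕ) : 0 ≤ cfFin l := by
  cases l with
  | nil => simp [cfFin]
  | cons b l => simp only [cfFin]; have := cfFin_nonneg l; positivity

lemma cfFin_le_one {l : List ℕ} (hl : ∀ b ∈ l, 1 ≤ b) : cfFin l ≤ 1 := by
  cases l with
  | nil => simp [cfFin]
  | cons b l =>
    have hb : (1 : ℝ) ≤ b := by exact_mod_cast hl b List.mem_cons_self
    rw [cfFin, div_le_one (by linarith [cfFin_nonneg l])]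
    linarith [cfFin_nonneg l]

lemma abs_one_div_add_sub_le {a X Y : ℝ} (ha : 1 ≤ a) (hX : 0 ≤ X) (hY : 0 ≤ Y) :
    |1 / (a + X) - 1 / (a + Y)| ≤ |X - Y| := by
  have e : 1 / (a + X) - 1 / (a + Y) = (Y - X) / ((a + X) * (a + Y)) := by
    field_simp; ring
  have hXa : 0 < a + X := by linarith
  have hYa : 0 < a + Y := by linarith
  rw [e, abs_div, abs_sub_comm, abs_of_pos (mul_pos hXa hYa)]
  exact div_le_self (abs_nonneg _) (by nlinarith)

lemma abs_one_div_add_one_div_add_sub_le {a b X Y : ℝ} (ha : 1 ≤ a) (hb : 1 ≤ b)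
    (hX : 0 ≤ X) (hY : 0 ≤ Y) :
    |1 / (a + 1 / (b + X)) - 1 / (a + 1 / (b + Y))| ≤ |X - Y| / 4 := by
  have e : 1 / (a + 1 / (b + X)) - 1 / (a + 1 / (b + Y))
      = (X - Y) / ((a * (b + X) + 1) * (a * (b + Y) + 1)) := by
    field_simp; ring
  have hX' : 2 ≤ a * (b + X) + 1 := by nlinarith
  have hY' : 2 ≤ a * (b + Y) + 1 := by nlinarith
  rw [e, abs_div, abs_of_pos (by positivity : (0 : ℝ) < (a * (b + X) + 1) * (a * (b + Y) + 1))]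
  exact div_le_div_of_nonneg_left (abs_nonneg _) (by norm_num) (by nlinarith)

/-- One step `x ↦ 1 / (b + x)` is only `1`-Lipschitz, but two consecutive steps contract by `4`. -/
lemma abs_cfFin_append_sub_le : ∀ {l : List ℕ}, (∀ b ∈ l, 1 ≤ b) → ∀ m m' : List ℕ,
    |cfFin (l ++ m) - cfFin (l ++ m')| ≤ 2 * (1 / 2) ^ l.length * |cfFin m - cfFin m'|
  | [], _, m, m' => by
    simp only [List.nil_append, List.length_nil, pow_zero, mul_one]
    linarith [abs_nonneg (cfFin m - cfFin m')]
  | [b], hl, m, m' => by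
    have hb : (1 : ℝ) ≤ b := by exact_mod_cast hl b List.mem_cons_self
    simpa [cfFin] using abs_one_div_add_sub_le hb (cfFin_nonneg m) (cfFin_nonneg m')
  | b :: c :: l, hl, m, m' => by
    have hb : (1 : ℝ) ≤ b := by exact_mod_cast hl b List.mem_cons_self
    have hc : (1 : ℝ) ≤ c := by exact_mod_cast hl c (by simp)
    have ih := abs_cfFin_append_sub_le (l := l) (fun x hx => hl x (by simp [hx])) m m'
    simp only [List.cons_append, cfFin, List.length_cons]
    calc _ ≤ |cfFin (l ++ m) - cfFin (l ++ m')| / 4 :=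
          abs_one_div_add_one_div_add_sub_le hb hc (cfFin_nonneg _) (cfFin_nonneg _)
      _ ≤ 2 * (1 / 2) ^ l.length * |cfFin m - cfFin m'| / 4 := by gcongr
      _ = _ := by ring

noncomputable def cfConv (a : ℕ → ℕ) (n : ℕ) : ℝ := cfFin (List.ofFn fun i : Fin n => a i)

lemma dist_cfConv_succ_le {a : ℕ → ℕ} (ha : ∀ n, 1 ≤ a n) (n : ℕ) :
    dist (cfConv a n) (cfConv a (n + 1)) ≤ 4 / 2 / 2 ^ n := by
  have hl : List.ofFn (fun i : Fin (n + 1) => a i) =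
      List.ofFn (fun i : Fin n => a i) ++ [a n] := by
    rw [List.ofFn_succ', List.concat_eq_append]; rfl
  have h := abs_cfFin_append_sub_le (l := List.ofFn fun i : Fin n => a i)
    (by simp [List.mem_ofFn, ha]) [] [a n]
  have hq : |cfFin [] - cfFin [a n]| ≤ 1 := by
    rw [cfFin, zero_sub, abs_neg, abs_of_nonneg (cfFin_nonneg _)]
    exact cfFin_le_one (by simp [ha])
  rw [dist_comm, Real.dist_eq, cfConv, cfConv, hl]
  simp only [List.append_nil, List.length_ofFn] at h
  calc _ ≤ 2 * (1 / 2) ^ n * |cfFin [] - cfFin [a n]| := by rw [abs_sub_comm]; exact h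
    _ ≤ 2 * (1 / 2) ^ n * 1 := by gcongr
    _ = 4 / 2 / 2 ^ n := by rw [div_pow, one_pow]; ring

lemma tendsto_cfConv {a : ℕ → ℕ} (ha : ∀ n, 1 ≤ a n) :
    Tendsto (cfConv a) atTop (nhds (cfInf a)) := by
  obtain ⟨x, hx⟩ :=
    cauchySeq_tendsto_of_complete (cauchySeq_of_le_geometric_two (dist_cfConv_succ_le ha))
  have : cfInf a = x := hx.limUnder_eq
  rwa [this]

lemma cfInf_mem_Icc {a : ℕ → ℕ} (ha : ∀ n, 1 ≤ a n) : cfInf a ∈ Set.Icc (0 : ℝ) 1 :=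
  isClosed_Icc.mem_of_tendsto (tendsto_cfConv ha) (Eventually.of_forall fun n =>
    ⟨cfFin_nonneg _, cfFin_le_one (by simp [List.mem_ofFn, ha])⟩)

lemma cfInf_eq_one_div {a : ℕ → ℕ} (ha : ∀ n, 1 ≤ a n) :
    cfInf a = 1 / (a 0 + cfInf fun n => a (n + 1)) := by
  have ha' : ∀ n, 1 ≤ a (n + 1) := fun n => ha (n + 1)
  have hne : (a 0 : ℝ) + cfInf (fun n => a (n + 1)) ≠ 0 := by
    have : (1 : ℝ) ≤ a 0 := by exact_mod_cast ha 0
    linarith [(cfInf_mem_Icc ha').1]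
  have hconv : ∀ n, ((a 0 : ℝ) + cfConv (fun n => a (n + 1)) n)⁻¹ = cfConv a (n + 1) := by
    intro n
    simp only [cfConv, List.ofFn_succ, cfFin, one_div, Fin.val_zero, Fin.val_succ]
  have hlim := ((tendsto_const_nhds.add (tendsto_cfConv ha')).inv₀ hne).congr hconv
  rw [one_div]
  exact tendsto_nhds_unique ((tendsto_cfConv ha).comp (tendsto_add_atTop_nat 1)) hlim

lemma cfT_succ {a : ℕ → ℕ} (ha : ∀ n, 1 ≤ a n) (k : ℕ) :
    cfT a k = 1 / (a k + cfT a (k + 1)) := by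
  rw [cfT, cfInf_eq_one_div fun n => ha (n + k)]
  simp only [cfT, zero_add, add_assoc, add_comm 1 k]

lemma cfT_pos {a : ℕ → ℕ} (ha : ∀ n, 1 ≤ a n) (k : ℕ) : 0 < cfT a k := by
  have : (1 : ℝ) ≤ a k := by exact_mod_cast ha k
  rw [cfT_succ ha]
  have := (cfInf_mem_Icc fun n => ha (n + (k + 1))).1
  exact one_div_pos.mpr (by unfold cfT; linarith)

lemma cfT_le_one_div {a : ℕ → ℕ} (ha : ∀ n, 1 ≤ a n) (k : ℕ) : cfT a k ≤ 1 / a k := by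
  have : (1 : ℝ) ≤ a k := by exact_mod_cast ha k
  rw [cfT_succ ha]
  exact one_div_le_one_div_of_le (by linarith) (by linarith [cfT_pos ha (k + 1)])

lemma cfT_lt_one {a : ℕ → ℕ} (ha : ∀ n, 1 ≤ a n) (k : ℕ) : cfT a k < 1 := by
  have : (1 : ℝ) ≤ a k := by exact_mod_cast ha k
  rw [cfT_succ ha, div_lt_one (by linarith [cfT_pos ha (k + 1)])]
  linarith [cfT_pos ha (k + 1)]

lemma cfV_succ (a : ℕ → ℕ) (k : ℕ) : cfV a (k + 1) = 1 / (a k + cfV a k) := by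
  simp [cfV, List.range_succ, cfFin]

lemma cfV_nonneg (a : ℕ → ℕ) (k : ℕ) : 0 ≤ cfV a k := cfFin_nonneg _

lemma cfV_le_one {a : ℕ → ℕ} (ha : ∀ n, 1 ≤ a n) (k : ℕ) : cfV a k ≤ 1 :=
  cfFin_le_one (by simp [ha])

lemma cfT_mul_add_cfT_succ {a : ℕ → ℕ} (ha : ∀ n, 1 ≤ a n) (k : ℕ) :
    cfT a k * (a k + cfT a (k + 1)) = 1 := by
  rw [cfT_succ ha k, one_div_mul_cancel]
  have : (1 : ℝ) ≤ a k := by exact_mod_cast ha k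
  linarith [cfT_pos ha (k + 1)]

lemma abs_one_div_one_add_sub_le {g x : ℝ} (hg : g * (1 + g) = 1) (hg0 : 0 ≤ g) (hx : 0 ≤ x) :
    |1 / (1 + x) - g| ≤ g * |x - g| := by
  have hx1 : 0 < 1 + x := by linarith
  have e : 1 / (1 + x) - g = g * ((g - x) / (1 + x)) := by
    field_simp; linear_combination -hg
  rw [e, abs_mul, abs_of_nonneg hg0, abs_div, abs_sub_comm, abs_of_pos hx1]
  gcongr
  exact div_le_self (abs_nonneg _) (by linarith)

lemma inv_goldenRatio_mul_one_add : φ⁻¹ * (1 + φ⁻¹) = 1 := by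
  rw [Real.inv_goldenRatio, ← sub_eq_add_neg, Real.one_sub_goldenRatio, neg_mul,
    Real.goldenConj_mul_goldenRatio, neg_neg]

lemma inv_goldenRatio_mem_Icc : φ⁻¹ ∈ Set.Icc (0 : ℝ) 1 :=
  ⟨inv_nonneg.2 Real.goldenRatio_pos.le, inv_le_one_of_one_le₀ Real.one_lt_goldenRatio.le⟩

lemma tendsto_inv_goldenRatio_pow_atTop_nhds_zero :
    Tendsto (fun m : ℕ => φ⁻¹ ^ m) atTop (nhds 0) :=
  tendsto_pow_atTop_nhds_zero_of_lt_one inv_goldenRatio_mem_Icc.1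
    (inv_lt_one_of_one_lt₀ Real.one_lt_goldenRatio)

lemma eq_inv_goldenRatio_of_eq_one_div_one_add_succ {x : ℕ → ℝ} {N : ℕ}
    (hx : ∀ k, x k ∈ Set.Icc (0 : ℝ) 1) (h : ∀ k ≥ N, x k = 1 / (1 + x (k + 1))) :
    ∀ k ≥ N, x k = φ⁻¹ := by
  have hbound : ∀ m, ∀ k ≥ N, |x k - φ⁻¹| ≤ φ⁻¹ ^ m := by
    intro m
    induction m with
    | zero =>
      intro k _
      rw [pow_zero, abs_sub_le_iff]
      obtain ⟨hg0, hg1⟩ := inv_goldenRatio_mem_Icc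
      constructor <;> linarith [(hx k).1, (hx k).2]
    | succ m ih =>
      intro k hk
      rw [h k hk, pow_succ']
      exact (abs_one_div_one_add_sub_le inv_goldenRatio_mul_one_add
        inv_goldenRatio_mem_Icc.1 (hx (k + 1)).1).trans
        (by gcongr; exact ih (k + 1) (by omega))
  intro k hk
  exact sub_eq_zero.1 (abs_eq_zero.1 (le_antisymm
    (ge_of_tendsto' tendsto_inv_goldenRatio_pow_atTop_nhds_zero fun m => hbound m k hk)
    (abs_nonneg _)))

lemma tendsto_inv_goldenRatio_of_succ_eq_one_div_one_add {x : ℕ → ℝ} {N : ℕ}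
    (hx : ∀ k, 0 ≤ x k) (h : ∀ k ≥ N, x (k + 1) = 1 / (1 + x k)) :
    Tendsto x atTop (nhds φ⁻¹) := by
  have hbound : ∀ m, |x (m + N) - φ⁻¹| ≤ φ⁻¹ ^ m * |x N - φ⁻¹| := by
    intro m
    induction m with
    | zero => simp
    | succ m ih =>
      rw [add_right_comm, h _ (by omega), pow_succ', mul_assoc]
      exact (abs_one_div_one_add_sub_le inv_goldenRatio_mul_one_add
        inv_goldenRatio_mem_Icc.1 (hx _)).trans (by gcongr)
  have hlim : Tendsto (fun m => φ⁻¹ ^ m * |x N - φ⁻¹|) atTop (nhds 0) := by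
    simpa using tendsto_inv_goldenRatio_pow_atTop_nhds_zero.mul_const |x N - φ⁻¹|
  rw [← tendsto_add_atTop_iff_nat N, tendsto_iff_norm_sub_tendsto_zero]
  exact squeeze_zero (fun _ => norm_nonneg _) hbound hlim

lemma liminf_eq_of_eventually_eq_one {a : ℕ → ℕ} (ha : ∀ n, 1 ≤ a n)
    (h1 : ∀ᶠ k in atTop, a k = 1) :
    liminf (fun k => 1 + cfT a k * cfV a k) atTop = (5 - √5) / 2 := by
  obtain ⟨N, hN⟩ := eventually_atTop.1 h1
  have hT : ∀ k ≥ N, cfT a k = φ⁻¹ :=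
    eq_inv_goldenRatio_of_eq_one_div_one_add_succ
      (fun k => ⟨(cfT_pos ha k).le, (cfT_lt_one ha k).le⟩)
      fun k hk => by rw [cfT_succ ha, hN k hk, Nat.cast_one]
  have hV : Tendsto (cfV a) atTop (nhds φ⁻¹) :=
    tendsto_inv_goldenRatio_of_succ_eq_one_div_one_add (cfV_nonneg a)
      fun k hk => by rw [cfV_succ, hN k hk, Nat.cast_one]
  have hlim : Tendsto (fun k => 1 + cfT a k * cfV a k) atTop (nhds (1 + φ⁻¹ * φ⁻¹)) :=
    (tendsto_const_nhds.add (tendsto_const_nhds.mul hV)).congr'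
      (by filter_upwards [eventually_ge_atTop N] with k hk; rw [hT k hk])
  rw [hlim.liminf_eq, Real.inv_goldenRatio, Real.goldenConj]
  nlinarith [Real.sq_sqrt (show (0 : ℝ) ≤ 5 by norm_num)]

lemma two_mul_div_one_sub_le_cfT_succ {a : ℕ → ℕ} (ha : ∀ n, 1 ≤ a n) {u : ℝ} (hu0 : 0 ≤ u)
    (hu1 : u < 1) {k : ℕ} (hk : 2 ≤ a k) (h₀ : u ≤ cfT a k * cfV a k)
    (h₁ : u ≤ cfT a (k + 1) * cfV a (k + 1)) :
    2 * u / (1 - u) ≤ cfT a (k + 1) := by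
  have hk' : (2 : ℝ) ≤ a k := by exact_mod_cast hk
  set x := cfT a (k + 1)
  set y := cfV a k
  have hx := cfT_pos ha (k + 1)
  have hy := cfV_nonneg a k
  rw [cfT_succ ha, one_div_mul_eq_div, le_div_iff₀ (by linarith)] at h₀
  rw [cfV_succ, mul_one_div, le_div_iff₀ (by linarith)] at h₁
  have hy' : u * (2 + x) ≤ y := by nlinarith
  have hx' : u * (2 + y) ≤ x := by nlinarith
  rw [div_le_iff₀ (by linarith)]
  nlinarith

lemma two_mul_sub_le_div_one_sub_sub {x : ℝ} (hx : √3 - 1 ≤ x) (hx1 : x < 1) :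
    2 * (x - (√3 - 1)) ≤ x / (1 - x) - 2 - (√3 - 1) := by
  have h3 := Real.sq_sqrt (show (0 : ℝ) ≤ 3 by norm_num)
  have hs : 1 < √3 := by nlinarith [Real.sqrt_nonneg 3]
  rw [le_sub_iff_add_le, le_sub_iff_add_le, le_div_iff₀ (by linarith)]
  have hpos : 0 ≤ 3 * √3 - 2 + 2 * (x - (√3 - 1)) := by linarith
  nlinarith [mul_nonneg (sub_nonneg.2 hx) hpos]

lemma sqrt_three_sub_one_lt_two_mul_div_one_sub {u : ℝ} (hu : 2 - √3 < u) (hu1 : u < 1) :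
    √3 - 1 < 2 * u / (1 - u) := by
  rw [lt_div_iff₀ (by linarith)]
  nlinarith [Real.sq_sqrt (show (0 : ℝ) ≤ 3 by norm_num)]

lemma cfT_add_two_of_two_mul_div_one_sub_le {a : ℕ → ℕ} (ha : ∀ n, 1 ≤ a n) {u : ℝ}
    (hu : 2 - √3 < u) (hu1 : u < 1) {k : ℕ} (hP : ∀ j ≥ k + 1, u ≤ cfT a j * cfV a j)
    (hk : 2 * u / (1 - u) ≤ cfT a k) :
    2 * u / (1 - u) ≤ cfT a (k + 2) ∧
      2 * (cfT a k - (√3 - 1)) ≤ cfT a (k + 2) - (√3 - 1) := by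
  have h3 := Real.sq_sqrt (show (0 : ℝ) ≤ 3 by norm_num)
  have hs1 : 1.7 < √3 := by nlinarith [Real.sqrt_nonneg 3]
  have hs2 : √3 < 1.8 := by nlinarith [Real.sqrt_nonneg 3]
  have hu0 : 0 < u := by linarith
  have hcL := sqrt_three_sub_one_lt_two_mul_div_one_sub hu hu1
  set x := cfT a k
  set y := cfT a (k + 1)
  set z := cfT a (k + 2)
  have hx1 : x < 1 := cfT_lt_one ha k
  have hy0 : 0 < y := cfT_pos ha (k + 1)
  have hz1 : z < 1 := cfT_lt_one ha (k + 2)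
  have hak : a k = 1 := by
    by_contra hne
    have h2 : (2 : ℝ) ≤ a k := by exact_mod_cast (show 2 ≤ a k by have := ha k; omega)
    have := cfT_le_one_div ha k
    have : 1 / (a k : ℝ) ≤ 1 / 2 := one_div_le_one_div_of_le (by norm_num) h2
    linarith
  have hxy : x * (1 + y) = 1 := by
    simpa [hak] using cfT_mul_add_cfT_succ ha k
  have huy : u ≤ y := by
    nlinarith [hP (k + 1) le_rfl, cfV_le_one ha (k + 1), cfV_nonneg a (k + 1)]
  have hak1 : 2 ≤ a (k + 1) := by
    by_contra hne
    have h1 : a (k + 1) = 1 := by have := ha (k + 1); omega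
    have hyz : y * (1 + z) = 1 := by simpa [h1] using cfT_mul_add_cfT_succ ha (k + 1)
    nlinarith
  have hLz : 2 * u / (1 - u) ≤ z :=
    two_mul_div_one_sub_le_cfT_succ ha hu0.le hu1 hak1 (hP (k + 1) le_rfl)
      (hP (k + 2) (by omega))
  have hak1' : a (k + 1) = 2 := by
    by_contra hne
    have h3' : (3 : ℝ) ≤ a (k + 1) := by
      exact_mod_cast (show 3 ≤ a (k + 1) by omega)
    have hyz : y * (a (k + 1) + z) = 1 := cfT_mul_add_cfT_succ ha (k + 1)
    nlinarith
  have hyz : y * (2 + z) = 1 := by simpa [hak1'] using cfT_mul_add_cfT_succ ha (k + 1)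
  have hz : z = x / (1 - x) - 2 := by
    rw [eq_sub_iff_add_eq, eq_div_iff (by linarith)]
    nlinarith
  exact ⟨hLz, hz ▸ two_mul_sub_le_div_one_sub_sub (by linarith) hx1⟩

lemma frequently_cfT_mul_cfV_lt {a : ℕ → ℕ} (ha : ∀ n, 1 ≤ a n)
    (h2 : ∃ᶠ k in atTop, 2 ≤ a k) {u : ℝ} (hu : 2 - √3 < u) :
    ∃ᶠ k in atTop, cfT a k * cfV a k < u := by
  by_contra h
  obtain ⟨N, hN⟩ := eventually_atTop.1 (not_frequently.1 h)
  simp only [not_lt] at hN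
  have hu1 : u < 1 := (hN N le_rfl).trans_lt <|
    mul_lt_one_of_nonneg_of_lt_one_left (cfT_pos ha N).le (cfT_lt_one ha N) (cfV_le_one ha N)
  have hu0 : 0 ≤ u := by
    nlinarith [Real.sqrt_nonneg 3, Real.sq_sqrt (show (0 : ℝ) ≤ 3 by norm_num)]
  obtain ⟨k, hkN, hk⟩ := frequently_atTop.1 h2 N
  set L := 2 * u / (1 - u)
  have hgrow : ∀ j, L ≤ cfT a (k + 1 + 2 * j) ∧
      2 ^ j * (L - (√3 - 1)) ≤ cfT a (k + 1 + 2 * j) - (√3 - 1) := by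
    intro j
    induction j with
    | zero =>
      simpa using
        two_mul_div_one_sub_le_cfT_succ ha hu0 hu1 hk (hN k hkN) (hN (k + 1) (by omega))
    | succ j ih =>
      obtain ⟨hL, hexp⟩ :=
        cfT_add_two_of_two_mul_div_one_sub_le ha hu hu1 (fun i hi => hN i (by omega)) ih.1
      rw [show k + 1 + 2 * (j + 1) = k + 1 + 2 * j + 2 by ring, pow_succ]
      exact ⟨hL, by linarith [ih.2]⟩
  have hδ : 0 < L - (√3 - 1) := sub_pos.2 (sqrt_three_sub_one_lt_two_mul_div_one_sub hu hu1)
  obtain ⟨j, hj⟩ := pow_unbounded_of_one_lt (2 / (L - (√3 - 1))) one_lt_two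
  rw [div_lt_iff₀ hδ] at hj
  linarith [(hgrow j).2, cfT_lt_one ha (k + 1 + 2 * j), Real.sqrt_nonneg 3]

lemma liminf_le_of_frequently_two_le {a : ℕ → ℕ} (ha : ∀ n, 1 ≤ a n)
    (h2 : ∃ᶠ k in atTop, 2 ≤ a k) :
    liminf (fun k => 1 + cfT a k * cfV a k) atTop ≤ 3 - √3 := by
  refine le_of_forall_gt_imp_ge_of_dense fun c hc => liminf_le_of_frequently_le ?_ ?_
  · exact (frequently_cfT_mul_cfV_lt ha h2 (u := c - 1) (by linarith)).mono
      fun k hk => by linarith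
  · exact isBoundedUnder_of ⟨1, fun k => le_add_of_nonneg_right
      (mul_nonneg (cfT_pos ha k).le (cfV_nonneg a k))⟩

theorem stmt13_general (a : ℕ → ℕ) (ha : ∀ n, 1 ≤ a n) :
    Filter.liminf (fun k => 1 + cfT a k * cfV a k) Filter.atTop ≤ 3 - Real.sqrt 3 ∨
    Filter.liminf (fun k => 1 + cfT a k * cfV a k) Filter.atTop = (5 - Real.sqrt 5) / 2 := by
  by_cases h1 : ∀ᶠ k in atTop, a k = 1
  · exact Or.inr (liminf_eq_of_eventually_eq_one ha h1)
  · refine Or.inl (liminf_le_of_frequently_two_le ha ?_)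
    exact (not_eventually.1 h1).mono fun k hk => by have := ha k; omega

/-- gap in the lower BL spectrum of rotations between 3 − √3 and (5 − √5)/2. -/
theorem stmt13 (a : ℕ → ℕ) (ha : ∀ n, 1 ≤ a n) (hirr : Irrational (cfInf a))
    (hbdd : ∃ M : ℕ, ∀ k, a k ≤ M) :
    Filter.liminf (fun k => 1 + cfT a k * cfV a k) Filter.atTop ≤ 3 - Real.sqrt 3 ∨
    Filter.liminf (fun k => 1 + cfT a k * cfV a k) Filter.atTop = (5 - Real.sqrt 5) / 2 :=
  stmt13_general a ha
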